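/- Let π be a possibility distribution on ℝⁿ satisfying Assumption 1 whose cuts have the form C(λ_i) = {a ∈ ℝⁿ : a̲(λ_i) ≤ a ≤ ā(λ_i), ‖a − â‖_∞ ≤ δ̄(λ_i)} for vectors a̲(λ_i) ≤ â ≤ ā(λ_i) and scalars δ̄(λ_i) ≥ 0, i ∈ Λ. Let ℓ be a positive integer, ε ∈ [0,1), b ∈ ℝ, x ∈ ℝⁿ. Then sup_{P ∈ P_π^ℓ} CVaR_P^ε[ãᵀx] ≤ b holds if and only if there exist w, t ∈ ℝ, reals v_i ≥ 0, and nonnegative vectors α_i, β_i, φ_i, ξ_i, γ_i ∈ ℝ₊ⁿ (i ∈ Λ) such that: w + Σ_{i∈Λ}(λ_i − 1)v_i ≤ (b − t)(1 − ε); w − Σ_{j≤i} v_j ≥ 0 for all i ∈ Λ; w − Σ_{j≤i} v_j + t ≥ ā(λ_i)ᵀα_i − a̲(λ_i)ᵀβ_i + âᵀ(φ_i − ξ_i) + δ̄(λ_i)·Σ_j γ_{ij} for all i ∈ Λ; α_{ij} − β_{ij} + φ_{ij} − ξ_{ij} = x_j for all j ∈ [n], i ∈ Λ; and γ_{ij}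 − φ_{ij} − ξ_{ij} ≥ 0 for all j ∈ [n], i ∈ Λ. -/

import Mathlib

open MeasureTheory Set
open scoped ENNReal

/-- Conditional Value at Risk at level `ε` of the random variable `X` under `P`. -/
noncomputable def cvar {Ω : Type*} [MeasurableSpace Ω] (P : Measure Ω) (ε : ℝ) (X : Ω → ℝ) : ℝ :=
  ⨅ t : ℝ, (t + (1 / (1 - ε)) * ∫ a, max (X a - t) 0 ∂P)

/-- The discrete ambiguity set `P_π^ℓ`. -/
def ambiguitySet (n ℓ : ℕ) (C : ℝ → Set (Fin n → ℝ)) : Set (Measure (Fin n → ℝ)) :=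
  {P | IsProbabilityMeasure P ∧
    ∀ i : Fin (ℓ + 1), ENNReal.ofReal (1 - ((i : ℕ) : ℝ) / ℓ) ≤ P (C (((i : ℕ) : ℝ) / ℓ))}

/-!
Write `S k = C (k / ℓ)`, a decreasing chain of sets, and `X a = aᵀx`. By the Rockafellar–Uryasev
formula, and since its infimum over `t` is attained, `CVaR ≤ b` holds iff
`t + E (X - t)⁺ / (1 - ε) ≤ b` for some `t`. Given `w, t, v` with `u i := w - ∑_{j ≤ i} v j ≥ 0` and
`X ≤ u i + t` on `S i`, the nesting gives `(X - t)⁺ ≤ w - ∑ i, v i 1_{S i}` on `S 0`, whose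
expectation under any `P` of the ambiguity set is at most `w + ∑ i, (λ_i - 1) v i`. Conversely, the
uniform distribution on maximisers of `X` over `S 0, …, S (ℓ - 1)` lies in the ambiguity set, and at
its optimal `t` the values `u i := (max_{S i} X - t)⁺` yield a certificate by Abel summation.
Finally `max_{S i} X ≤ c` is LP duality for a box intersected with an `L_∞` ball, which splits into
one interval per coordinate.
-/

section BoxBall

variable {ι : Type*} [Fintype ι]

theorem exists_mem_interval_dual_eq {lo hi c d : ℝ} (hlo : lo ≤ c) (hhi : c ≤ hi) (hd : 0 ≤ d)
    (x : ℝ) :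
    ∃ a α β φ ξ : ℝ, (lo ≤ a ∧ a ≤ hi) ∧ |a - c| ≤ d ∧ 0 ≤ α ∧ 0 ≤ β ∧ 0 ≤ φ ∧ 0 ≤ ξ ∧
      α - β + φ - ξ = x ∧ hi * α - lo * β + c * (φ - ξ) + d * (φ + ξ) = a * x := by
  rcases le_total 0 x with hx | hx
  · rcases le_total hi (c + d) with h | h
    · exact ⟨hi, x, 0, 0, 0, ⟨hlo.trans hhi, le_rfl⟩, abs_le.2 ⟨by linarith, by linarith⟩,
        hx, le_rfl, le_rfl, le_rfl, by ring, by ring⟩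
    · exact ⟨c + d, 0, 0, x, 0, ⟨by linarith, h⟩, by simp [abs_of_nonneg hd],
        le_rfl, le_rfl, hx, le_rfl, by ring, by ring⟩
  · rcases le_total (c - d) lo with h | h
    · exact ⟨lo, 0, -x, 0, 0, ⟨le_rfl, hlo.trans hhi⟩, abs_le.2 ⟨by linarith, by linarith⟩,
        le_rfl, by linarith, le_rfl, le_rfl, by ring, by ring⟩
    · exact ⟨c - d, 0, 0, 0, -x, ⟨h, by linarith⟩, by simp [abs_of_nonneg hd],
        le_rfl, le_rfl, le_rfl, by linarith, by ring, by ring⟩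

theorem mul_le_of_mem_interval {lo hi c d a x α β φ ξ γ : ℝ} (ha : lo ≤ a ∧ a ≤ hi)
    (had : |a - c| ≤ d) (hα : 0 ≤ α) (hβ : 0 ≤ β) (hφ : 0 ≤ φ) (hξ : 0 ≤ ξ)
    (hx : α - β + φ - ξ = x) (hγ : 0 ≤ γ - φ - ξ) :
    a * x ≤ hi * α - lo * β + c * (φ - ξ) + d * γ := by
  obtain ⟨had₁, had₂⟩ := abs_le.1 had
  have hd : 0 ≤ d := (abs_nonneg _).trans had
  have h₁ := mul_le_mul_of_nonneg_right ha.2 hα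
  have h₂ := mul_le_mul_of_nonneg_right ha.1 hβ
  have h₃ := mul_le_mul_of_nonneg_right had₂ hφ
  have h₄ := mul_le_mul_of_nonneg_right had₁ hξ
  have h₅ := mul_nonneg hd hγ
  rw [← hx]
  linarith

def boxBall (lo hi c : ι → ℝ) (d : ℝ) : Set (ι → ℝ) :=
  {a | (∀ j, lo j ≤ a j ∧ a j ≤ hi j) ∧ ∀ j, |a j - c j| ≤ d}

variable {lo hi c : ι → ℝ} {d : ℝ}

theorem sum_mul_le_of_mem_boxBall {a : ι → ℝ} (ha : a ∈ boxBall lo hi c d) {x α β φ ξ γ : ι → ℝ}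
    (hα : ∀ j, 0 ≤ α j) (hβ : ∀ j, 0 ≤ β j) (hφ : ∀ j, 0 ≤ φ j) (hξ : ∀ j, 0 ≤ ξ j)
    (hx : ∀ j, α j - β j + φ j - ξ j = x j) (hγ : ∀ j, 0 ≤ γ j - φ j - ξ j) :
    ∑ j, a j * x j ≤
      ∑ j, hi j * α j - ∑ j, lo j * β j + ∑ j, c j * (φ j - ξ j) + d * ∑ j, γ j := by
  simp only [Finset.mul_sum, ← Finset.sum_sub_distrib, ← Finset.sum_add_distrib]
  exact Finset.sum_le_sum fun j _ =>
    mul_le_of_mem_interval (ha.1 j) (ha.2 j) (hα j) (hβ j) (hφ j) (hξ j) (hx j) (hγ j)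

theorem exists_mem_boxBall_dual_eq (hlo : ∀ j, lo j ≤ c j) (hhi : ∀ j, c j ≤ hi j) (hd : 0 ≤ d)
    (x : ι → ℝ) :
    ∃ a ∈ boxBall lo hi c d, ∃ α β φ ξ : ι → ℝ,
      (∀ j, 0 ≤ α j) ∧ (∀ j, 0 ≤ β j) ∧ (∀ j, 0 ≤ φ j) ∧ (∀ j, 0 ≤ ξ j) ∧
      (∀ j, α j - β j + φ j - ξ j = x j) ∧
      ∑ j, hi j * α j - ∑ j, lo j * β j + ∑ j, c j * (φ j - ξ j) + d * ∑ j, (φ j + ξ j) =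
        ∑ j, a j * x j := by
  choose a α β φ ξ ha had hα hβ hφ hξ hx hval using
    fun j => exists_mem_interval_dual_eq (hlo j) (hhi j) hd (x j)
  refine ⟨a, ⟨ha, had⟩, α, β, φ, ξ, hα, hβ, hφ, hξ, hx, ?_⟩
  simp only [Finset.mul_sum, ← Finset.sum_sub_distrib, ← Finset.sum_add_distrib, hval]

theorem exists_isMaxOn_boxBall (hlo : ∀ j, lo j ≤ c j) (hhi : ∀ j, c j ≤ hi j) (hd : 0 ≤ d)
    (x : ι → ℝ) :
    ∃ a ∈ boxBall lo hi c d, IsMaxOn (fun a => ∑ j, a j * x j) (boxBall lo hi c d) a := by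
  obtain ⟨a, ha, α, β, φ, ξ, hα, hβ, hφ, hξ, hx, hval⟩ := exists_mem_boxBall_dual_eq hlo hhi hd x
  refine ⟨a, ha, fun b hb => ?_⟩
  show ∑ j, b j * x j ≤ ∑ j, a j * x j
  rw [← hval]
  exact sum_mul_le_of_mem_boxBall hb hα hβ hφ hξ hx fun j => by simp

theorem forall_mem_boxBall_le_iff (hlo : ∀ j, lo j ≤ c j) (hhi : ∀ j, c j ≤ hi j) (hd : 0 ≤ d)
    (x : ι → ℝ) (b : ℝ) :
    (∀ a ∈ boxBall lo hi c d, ∑ j, a j * x j ≤ b) ↔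
      ∃ α β φ ξ γ : ι → ℝ,
        (∀ j, 0 ≤ α j) ∧ (∀ j, 0 ≤ β j) ∧ (∀ j, 0 ≤ φ j) ∧ (∀ j, 0 ≤ ξ j) ∧ (∀ j, 0 ≤ γ j) ∧
        ∑ j, hi j * α j - ∑ j, lo j * β j + ∑ j, c j * (φ j - ξ j) + d * ∑ j, γ j ≤ b ∧
        (∀ j, α j - β j + φ j - ξ j = x j) ∧ (∀ j, 0 ≤ γ j - φ j - ξ j) := by
  constructor
  · intro h
    obtain ⟨a, ha, α, β, φ, ξ, hα, hβ, hφ, hξ, hx, hval⟩ := exists_mem_boxBall_dual_eq hlo hhi hd x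
    exact ⟨α, β, φ, ξ, fun j => φ j + ξ j, hα, hβ, hφ, hξ, fun j => add_nonneg (hφ j) (hξ j),
      hval.trans_le (h a ha), hx, fun j => by simp⟩
  · rintro ⟨α, β, φ, ξ, γ, hα, hβ, hφ, hξ, -, hb, hx, hγ⟩ a ha
    exact (sum_mul_le_of_mem_boxBall ha hα hβ hφ hξ hx hγ).trans hb

end BoxBall

section CVaR

variable {Ω : Type*} [MeasurableSpace Ω] {P : Measure Ω} {ε : ℝ} {X : Ω → ℝ}

noncomputable def cvarObjective (P : Measure Ω) (ε : ℝ) (X : Ω → ℝ) (t : ℝ) : ℝ :=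
  t + (1 / (1 - ε)) * ∫ a, max (X a - t) 0 ∂P

theorem one_le_one_div_one_sub (hε : ε ∈ Ico (0 : ℝ) 1) : 1 ≤ 1 / (1 - ε) := by
  rw [le_div_iff₀ (by linarith [hε.2])]
  linarith [hε.1]

theorem self_le_cvarObjective (hε : ε ∈ Ico (0 : ℝ) 1) (t : ℝ) : t ≤ cvarObjective P ε X t := by
  have : 0 ≤ ∫ a, max (X a - t) 0 ∂P := integral_nonneg fun a => le_max_right _ _
  have := one_le_one_div_one_sub hε
  unfold cvarObjective
  nlinarith

theorem MeasureTheory.Integrable.max_sub_const_zero [IsFiniteMeasure P] (hX : Integrable X P)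
    (t : ℝ) :
    Integrable (fun a => max (X a - t) 0) P :=
  (hX.sub (integrable_const t)).pos_part

theorem le_cvarObjective [IsProbabilityMeasure P] (hε : ε ∈ Ico (0 : ℝ) 1) (hX : Integrable X P)
    {m : ℝ} (hm : ∀ᵐ a ∂P, m ≤ X a) (t : ℝ) : m ≤ cvarObjective P ε X t := by
  have hint : max (m - t) 0 ≤ ∫ a, max (X a - t) 0 ∂P := by
    simpa using integral_mono_ae (integrable_const (max (m - t) 0))
      (hX.max_sub_const_zero t)
      (hm.mono fun a ha => max_le_max_right 0 (sub_le_sub_right ha t))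
  have := one_le_one_div_one_sub hε
  unfold cvarObjective
  nlinarith [le_max_left (m - t) 0, le_max_right (m - t) 0]

theorem cvarObjective_of_ae_le [IsProbabilityMeasure P] (hX : Integrable X P) {t : ℝ}
    (ht : ∀ᵐ a ∂P, t ≤ X a) :
    cvarObjective P ε X t = t + (1 / (1 - ε)) * (∫ a, X a ∂P - t) := by
  have : ∫ a, max (X a - t) 0 ∂P = ∫ a, (X a - t) ∂P :=
    integral_congr_ae (ht.mono fun a ha => max_eq_left (sub_nonneg.2 ha))
  rw [cvarObjective, this, integral_sub hX (integrable_const t)]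
  simp

theorem lipschitzWith_integral_max_sub [IsProbabilityMeasure P] (hX : Integrable X P) :
    LipschitzWith 1 fun t => ∫ a, max (X a - t) 0 ∂P := by
  refine LipschitzWith.of_dist_le_mul fun s t => ?_
  rw [Real.dist_eq, ← integral_sub (hX.max_sub_const_zero s) (hX.max_sub_const_zero t),
    ← Real.norm_eq_abs]
  calc ‖∫ a, (max (X a - s) 0 - max (X a - t) 0) ∂P‖ ≤ dist s t * P.real univ :=
        norm_integral_le_of_norm_le_const (.of_forall fun a => ?_)
    _ = 1 * dist s t := by simp
  rw [Real.norm_eq_abs, Real.dist_eq, abs_sub_comm s t]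
  simpa using abs_max_sub_max_le_abs (X a - s) (X a - t) 0

theorem cvar_le_cvarObjective [IsProbabilityMeasure P] (hε : ε ∈ Ico (0 : ℝ) 1)
    (hX : Integrable X P) {m : ℝ} (hm : ∀ᵐ a ∂P, m ≤ X a) (t : ℝ) :
    cvar P ε X ≤ cvarObjective P ε X t :=
  ciInf_le ⟨m, Set.forall_mem_range.2 (le_cvarObjective hε hX hm)⟩ t

theorem exists_cvarObjective_eq_cvar [IsProbabilityMeasure P] (hε : ε ∈ Ico (0 : ℝ) 1)
    (hX : Integrable X P) {m : ℝ} (hm : ∀ᵐ a ∂P, m ≤ X a) :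
    ∃ t, cvarObjective P ε X t = cvar P ε X := by
  have hψ : Continuous (cvarObjective P ε X) :=
    continuous_id.add (continuous_const.mul (lipschitzWith_integral_max_sub hX).continuous)
  -- left of `m` the objective has slope `1 - 1 / (1 - ε) ≤ 0`, and it dominates `t ↦ t`,
  -- so it is minimised on `[m, max m (cvarObjective P ε X m)]`
  have hleft : ∀ s ≤ m, cvarObjective P ε X m ≤ cvarObjective P ε X s := by
    intro s hs
    rw [cvarObjective_of_ae_le hX hm, cvarObjective_of_ae_le hX (hm.mono fun a ha => hs.trans ha)]
    nlinarith [one_le_one_div_one_sub hε]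
  obtain ⟨t, -, hmin⟩ := isCompact_Icc.exists_isMinOn
    (nonempty_Icc.2 (le_max_left m (cvarObjective P ε X m))) hψ.continuousOn
  have hmin' : ∀ s, cvarObjective P ε X t ≤ cvarObjective P ε X s := by
    intro s
    have htm := hmin ⟨le_rfl, le_max_left m (cvarObjective P ε X m)⟩
    rcases le_total s m with hs | hs
    · exact htm.trans (hleft s hs)
    rcases le_total s (max m (cvarObjective P ε X m)) with hs' | hs'
    · exact hmin ⟨hs, hs'⟩
    · exact htm.trans ((le_max_right _ _).trans (hs'.trans (self_le_cvarObjective hε s)))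
  exact ⟨t, le_antisymm (le_ciInf hmin') (cvar_le_cvarObjective hε hX hm t)⟩

end CVaR

section Levels

theorem Fin.sum_Iic_val {ℓ : ℕ} (f : ℕ → ℝ) (i : Fin (ℓ + 1)) :
    ∑ j ∈ Finset.Iic i, f j = ∑ j ∈ Finset.range (i + 1), f j := by
  rw [Nat.range_succ_eq_Iic, ← Fin.map_valEmbedding_Iic, Finset.sum_map]
  rfl

theorem sum_range_succ_sub_pred (u : ℕ → ℝ) (k : ℕ) :
    ∑ j ∈ Finset.range (k + 1), (u (j - 1) - u j) = u 0 - u k := by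
  rw [Finset.sum_range_succ']
  simpa using Finset.sum_range_sub' u k

theorem sum_range_succ_mul_sub_pred (u : ℕ → ℝ) (c : ℝ) (N : ℕ) :
    ∑ i ∈ Finset.range (N + 1), ((i : ℝ) - c) * (u (i - 1) - u i) =
      ∑ i ∈ Finset.range N, u i - (N - c) * u N - c * u 0 := by
  induction N with
  | zero => simp
  | succ N ih =>
    rw [Finset.sum_range_succ, ih, Finset.sum_range_succ]
    push_cast
    ring

theorem add_sum_div_sub_one_mul_sub_pred {ℓ : ℕ} (hℓ : ℓ ≠ 0) (u : ℕ → ℝ) :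
    u 0 + ∑ i : Fin (ℓ + 1), (((i : ℕ) : ℝ) / ℓ - 1) * (u (i - 1) - u i) =
      (ℓ : ℝ)⁻¹ * ∑ k ∈ Finset.range ℓ, u k := by
  have h := sum_range_succ_mul_sub_pred u ℓ ℓ
  rw [Fin.sum_univ_eq_sum_range (fun i => ((i : ℝ) / ℓ - 1) * (u (i - 1) - u i))]
  have (i : ℕ) : ((i : ℝ) / ℓ - 1) * (u (i - 1) - u i) =
      (ℓ : ℝ)⁻¹ * (((i : ℝ) - ℓ) * (u (i - 1) - u i)) := by
    field_simp
  simp only [this, ← Finset.mul_sum, h]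
  field_simp
  ring

theorem Antitone.exists_forall_mem_iff_le {ι α : Type*} [Fintype ι] [LinearOrder ι] [OrderBot ι]
    {S : ι → Set α} (hS : Antitone S) {y : α} (hy : y ∈ S ⊥) : ∃ K, ∀ i, y ∈ S i ↔ i ≤ K := by
  classical
  obtain ⟨K, hK, hmax⟩ := (Finset.univ.filter fun i => y ∈ S i).exists_max_image id
    ⟨⊥, by simpa using hy⟩
  simp only [Finset.mem_filter, Finset.mem_univ, true_and, id] at hK hmax
  exact ⟨K, fun i => ⟨hmax i, fun hi => hS hi hK⟩⟩

theorem max_sub_le_sub_sum_indicator {Ω : Type*} {S : ℕ → Set Ω} {ℓ : ℕ} {X : Ω → ℝ}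
    (hS : Antitone S) {y : Ω} (hy : y ∈ S 0) {w t : ℝ} {v : Fin (ℓ + 1) → ℝ}
    (hpart : ∀ i : Fin (ℓ + 1), 0 ≤ w - ∑ j ∈ Finset.Iic i, v j)
    (hbound : ∀ i : Fin (ℓ + 1), ∀ y ∈ S i, X y ≤ w - ∑ j ∈ Finset.Iic i, v j + t) :
    max (X y - t) 0 ≤ w - ∑ i : Fin (ℓ + 1), v i * (S i).indicator 1 y := by
  classical
  obtain ⟨K, hK⟩ := Antitone.exists_forall_mem_iff_le (S := fun i : Fin (ℓ + 1) => S i)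
    (fun i j hij => hS hij) hy
  have hsum : ∑ i : Fin (ℓ + 1), v i * (S i).indicator 1 y = ∑ j ∈ Finset.Iic K, v j := by
    simp only [indicator_apply, hK, Pi.one_apply, mul_ite, mul_one, mul_zero]
    rw [← Finset.sum_filter]
    congr 1
    ext i
    simp
  rw [hsum]
  exact max_le (by linarith [hbound K y ((hK K).2 le_rfl)]) (hpart K)

end Levels

section Empirical

variable {Ω : Type*} [MeasurableSpace Ω]

noncomputable def empiricalMeasure (a : ℕ → Ω) (ℓ : ℕ) : Measure Ω :=
  (ℓ : ℝ≥0∞)⁻¹ • ∑ k ∈ Finset.range ℓ, Measure.dirac (a k)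

theorem isProbabilityMeasure_empiricalMeasure (a : ℕ → Ω) {ℓ : ℕ} (hℓ : ℓ ≠ 0) :
    IsProbabilityMeasure (empiricalMeasure a ℓ) := by
  constructor
  simp [empiricalMeasure, ENNReal.inv_mul_cancel (Nat.cast_ne_zero.2 hℓ) (ENNReal.natCast_ne_top ℓ)]

theorem integral_empiricalMeasure {f : Ω → ℝ} (hf : StronglyMeasurable f) (a : ℕ → Ω) (ℓ : ℕ) :
    ∫ y, f y ∂empiricalMeasure a ℓ = (ℓ : ℝ)⁻¹ * ∑ k ∈ Finset.range ℓ, f (a k) := by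
  rw [empiricalMeasure, integral_smul_measure,
    integral_finsetSum_measure fun k _ => integrable_dirac' hf enorm_lt_top]
  simp [integral_dirac' f _ hf]

theorem measureReal_empiricalMeasure {s : Set Ω} (hs : MeasurableSet s) (a : ℕ → Ω) (ℓ : ℕ) :
    (empiricalMeasure a ℓ).real s = (ℓ : ℝ)⁻¹ * ∑ k ∈ Finset.range ℓ, s.indicator 1 (a k) := by
  rw [← integral_indicator_one hs, integral_empiricalMeasure (stronglyMeasurable_one.indicator hs)]

theorem one_sub_div_le_measureReal_empiricalMeasure {S : ℕ → Set Ω} (hS : Antitone S) {ℓ i : ℕ}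
    (hℓ : ℓ ≠ 0) (hi : i ≤ ℓ) (hmeas : MeasurableSet (S i)) {a : ℕ → Ω} (ha : ∀ k < ℓ, a k ∈ S k) :
    1 - (i : ℝ) / ℓ ≤ (empiricalMeasure a ℓ).real (S i) := by
  have hcount : ((ℓ - i : ℕ) : ℝ) ≤ ∑ k ∈ Finset.range ℓ, (S i).indicator 1 (a k) :=
    calc ((ℓ - i : ℕ) : ℝ) = ∑ k ∈ Finset.Ico i ℓ, (S i).indicator (1 : Ω → ℝ) (a k) := by
          rw [Finset.sum_congr rfl fun k hk =>
            indicator_of_mem (hS (Finset.mem_Ico.1 hk).1 (ha k (Finset.mem_Ico.1 hk).2)) _]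
          simp
      _ ≤ ∑ k ∈ Finset.range ℓ, (S i).indicator 1 (a k) :=
          Finset.sum_le_sum_of_subset_of_nonneg
            (fun k hk => Finset.mem_range.2 (Finset.mem_Ico.1 hk).2)
            fun k _ _ => indicator_nonneg (fun _ _ => zero_le_one) _
  rw [Nat.cast_sub hi] at hcount
  rw [measureReal_empiricalMeasure hmeas]
  calc 1 - (i : ℝ) / ℓ = (ℓ : ℝ)⁻¹ * (ℓ - i) := by field_simp
    _ ≤ _ := by gcongr

end Empirical

section NestedLevels

variable {Ω : Type*} [MeasurableSpace Ω] {P : Measure Ω} {S : ℕ → Set Ω} {ℓ : ℕ} {X : Ω → ℝ}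
  {ε b : ℝ}

theorem integrable_of_ae_mem [IsFiniteMeasure P] {s : Set Ω} (hX : Measurable X)
    (hs : ∀ᵐ y ∂P, y ∈ s) {m M : ℝ} (hm : ∀ y ∈ s, m ≤ X y) (hM : ∀ y ∈ s, X y ≤ M) :
    Integrable X P :=
  .of_bound hX.aestronglyMeasurable (max |m| |M|)
    (hs.mono fun y hy => abs_le_max_abs_abs (hm y hy) (hM y hy))

theorem ae_mem_of_ofReal_one_le [IsProbabilityMeasure P] {s : Set Ω} (hs : MeasurableSet s)
    (h : ENNReal.ofReal 1 ≤ P s) : ∀ᵐ y ∂P, y ∈ s := by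
  rw [ae_mem_iff_measure_eq hs.nullMeasurableSet, measure_univ]
  exact le_antisymm prob_le_one (by simpa using h)

theorem integral_max_sub_le_of_certificate [IsProbabilityMeasure P] (hS : Antitone S)
    (hmeas : ∀ k ≤ ℓ, MeasurableSet (S k)) (hX : Integrable X P)
    (hP : ∀ i : Fin (ℓ + 1), 1 - ((i : ℕ) : ℝ) / ℓ ≤ P.real (S i)) (h0 : ∀ᵐ y ∂P, y ∈ S 0)
    {w t : ℝ} {v : Fin (ℓ + 1) → ℝ} (hv : ∀ i, 0 ≤ v i)
    (hpart : ∀ i : Fin (ℓ + 1), 0 ≤ w - ∑ j ∈ Finset.Iic i, v j)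
    (hbound : ∀ i : Fin (ℓ + 1), ∀ y ∈ S i, X y ≤ w - ∑ j ∈ Finset.Iic i, v j + t) :
    ∫ y, max (X y - t) 0 ∂P ≤ w + ∑ i : Fin (ℓ + 1), (((i : ℕ) : ℝ) / ℓ - 1) * v i := by
  have hind (i : Fin (ℓ + 1)) : Integrable (fun y => v i * (S i).indicator 1 y) P :=
    ((integrable_const 1).indicator (hmeas i i.is_le)).const_mul (v i)
  calc ∫ y, max (X y - t) 0 ∂P
      ≤ ∫ y, (w - ∑ i : Fin (ℓ + 1), v i * (S i).indicator 1 y) ∂P :=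
        integral_mono_ae (hX.max_sub_const_zero t)
          ((integrable_const w).sub (integrable_finsetSum _ fun i _ => hind i))
          (h0.mono fun y hy => max_sub_le_sub_sum_indicator hS hy hpart hbound)
    _ = w - ∑ i : Fin (ℓ + 1), v i * P.real (S i) := by
        rw [integral_sub (integrable_const w) (integrable_finsetSum _ fun i _ => hind i),
          integral_finsetSum _ fun i _ => hind i]
        simp [integral_const_mul, integral_indicator_one (hmeas _ (Fin.is_le _))]
    _ ≤ w - ∑ i : Fin (ℓ + 1), v i * (1 - ((i : ℕ) : ℝ) / ℓ) := by
        gcongr with i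
        · exact hv i
        · exact hP i
    _ = w + ∑ i : Fin (ℓ + 1), (((i : ℕ) : ℝ) / ℓ - 1) * v i := by
        rw [sub_eq_add_neg, ← Finset.sum_neg_distrib]
        exact congrArg (w + ·) (Finset.sum_congr rfl fun i _ => by ring)

theorem cvar_le_of_certificate [IsProbabilityMeasure P] (hε : ε ∈ Ico (0 : ℝ) 1)
    (hS : Antitone S) (hmeas : ∀ k ≤ ℓ, MeasurableSet (S k)) (hX : Measurable X)
    (hbdd : BddBelow (X '' S 0))
    (hP : ∀ i : Fin (ℓ + 1), ENNReal.ofReal (1 - ((i : ℕ) : ℝ) / ℓ) ≤ P (S i))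
    {w t : ℝ} {v : Fin (ℓ + 1) → ℝ} (hv : ∀ i, 0 ≤ v i)
    (hobj : w + ∑ i : Fin (ℓ + 1), (((i : ℕ) : ℝ) / ℓ - 1) * v i ≤ (b - t) * (1 - ε))
    (hpart : ∀ i : Fin (ℓ + 1), 0 ≤ w - ∑ j ∈ Finset.Iic i, v j)
    (hbound : ∀ i : Fin (ℓ + 1), ∀ y ∈ S i, X y ≤ w - ∑ j ∈ Finset.Iic i, v j + t) :
    cvar P ε X ≤ b := by
  obtain ⟨m, hm⟩ := hbdd
  have h0 : ∀ᵐ y ∂P, y ∈ S 0 := ae_mem_of_ofReal_one_le (hmeas 0 ℓ.zero_le) (by simpa using hP 0)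
  have hXint : Integrable X P :=
    integrable_of_ae_mem hX h0 (fun y hy => hm ⟨y, hy, rfl⟩) (hbound 0)
  have hint := integral_max_sub_le_of_certificate hS hmeas hXint
    (fun i => (ENNReal.ofReal_le_iff_le_toReal (measure_ne_top P _)).1 (hP i)) h0 hv hpart hbound
  have h1ε : 0 < 1 - ε := by linarith [hε.2]
  calc cvar P ε X ≤ cvarObjective P ε X t :=
        cvar_le_cvarObjective hε hXint (h0.mono fun y hy => hm ⟨y, hy, rfl⟩) t
    _ ≤ t + 1 / (1 - ε) * ((b - t) * (1 - ε)) := by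
        unfold cvarObjective
        gcongr
        exact hint.trans hobj
    _ = b := by field_simp; ring

theorem exists_certificate_of_forall_cvar_le (hℓ : ℓ ≠ 0) (hε : ε ∈ Ico (0 : ℝ) 1)
    (hS : Antitone S) (hmeas : ∀ k ≤ ℓ, MeasurableSet (S k)) (hX : Measurable X)
    (hbdd : BddBelow (X '' S 0)) (hmax : ∀ k ≤ ℓ, ∃ y ∈ S k, IsMaxOn X (S k) y)
    (h : ∀ P : Measure Ω, IsProbabilityMeasure P ∧
      (∀ i : Fin (ℓ + 1), ENNReal.ofReal (1 - ((i : ℕ) : ℝ) / ℓ) ≤ P (S i)) → cvar P ε X ≤ b) :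
    ∃ (w t : ℝ) (v : Fin (ℓ + 1) → ℝ), (∀ i, 0 ≤ v i) ∧
      w + ∑ i : Fin (ℓ + 1), (((i : ℕ) : ℝ) / ℓ - 1) * v i ≤ (b - t) * (1 - ε) ∧
      (∀ i : Fin (ℓ + 1), 0 ≤ w - ∑ j ∈ Finset.Iic i, v j) ∧
      ∀ i : Fin (ℓ + 1), ∀ y ∈ S i, X y ≤ w - ∑ j ∈ Finset.Iic i, v j + t := by
  have : Nonempty Ω := let ⟨y, _⟩ := hmax 0 ℓ.zero_le; ⟨y⟩
  choose! a ha hamax using hmax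
  have hPa := isProbabilityMeasure_empiricalMeasure a hℓ
  have hlevel (i : Fin (ℓ + 1)) :
      ENNReal.ofReal (1 - ((i : ℕ) : ℝ) / ℓ) ≤ empiricalMeasure a ℓ (S i) :=
    (ENNReal.ofReal_le_iff_le_toReal (measure_ne_top _ _)).2
      (one_sub_div_le_measureReal_empiricalMeasure hS hℓ i.is_le (hmeas i i.is_le)
        fun k hk => ha k hk.le)
  have h0 : ∀ᵐ y ∂empiricalMeasure a ℓ, y ∈ S 0 :=
    ae_mem_of_ofReal_one_le (hmeas 0 ℓ.zero_le) (by simpa using hlevel 0)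
  obtain ⟨m, hm⟩ := hbdd
  have hXint : Integrable X (empiricalMeasure a ℓ) :=
    integrable_of_ae_mem hX h0 (fun y hy => hm ⟨y, hy, rfl⟩) fun y hy => hamax 0 ℓ.zero_le hy
  obtain ⟨t, ht⟩ := exists_cvarObjective_eq_cvar hε hXint (h0.mono fun y hy => hm ⟨y, hy, rfl⟩)
  set u : ℕ → ℝ := fun k => max (X (a k) - t) 0
  have hmean : (ℓ : ℝ)⁻¹ * ∑ k ∈ Finset.range ℓ, u k ≤ (b - t) * (1 - ε) := by
    have hobj := ht.trans_le (h _ ⟨hPa, hlevel⟩)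
    rw [cvarObjective, integral_empiricalMeasure
      ((hX.sub_const t).max measurable_const).stronglyMeasurable] at hobj
    have h1ε : 0 < 1 - ε := by linarith [hε.2]
    calc (ℓ : ℝ)⁻¹ * ∑ k ∈ Finset.range ℓ, u k
        = (1 - ε) * (1 / (1 - ε) * ((ℓ : ℝ)⁻¹ * ∑ k ∈ Finset.range ℓ, u k)) := by field_simp
      _ ≤ (1 - ε) * (b - t) := by gcongr; linarith
      _ = (b - t) * (1 - ε) := mul_comm _ _
  have hu (j k : ℕ) (hjk : j ≤ k) (hk : k ≤ ℓ) : u k ≤ u j :=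
    max_le_max_right 0 (sub_le_sub_right (hamax j (hjk.trans hk) (hS hjk (ha k hk))) t)
  have hpart (i : Fin (ℓ + 1)) : u 0 - ∑ j ∈ Finset.Iic i, (u (j - 1) - u j) = u i := by
    rw [Fin.sum_Iic_val (fun j => u (j - 1) - u j), sum_range_succ_sub_pred]
    ring
  -- `u (i - 1) - u i` vanishes at `i = 0`, where `0 - 1 = 0` in `ℕ`
  refine ⟨u 0, t, fun i => u (i - 1) - u i, fun i => sub_nonneg.2 (hu _ _ (Nat.sub_le _ _) i.is_le),
    ?_, fun i => ?_, fun i y hy => ?_⟩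
  · rw [add_sum_div_sub_one_mul_sub_pred hℓ]
    exact hmean
  · rw [hpart]
    exact le_max_right _ _
  · rw [hpart]
    have hui : X (a i) - t ≤ u i := le_max_left _ _
    linarith [isMaxOn_iff.1 (hamax i i.is_le) y hy]

theorem forall_cvar_le_iff_exists_certificate (hℓ : ℓ ≠ 0) (hε : ε ∈ Ico (0 : ℝ) 1)
    (hS : Antitone S) (hmeas : ∀ k ≤ ℓ, MeasurableSet (S k)) (hX : Measurable X)
    (hbdd : BddBelow (X '' S 0)) (hmax : ∀ k ≤ ℓ, ∃ y ∈ S k, IsMaxOn X (S k) y) :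
    (∀ P : Measure Ω, IsProbabilityMeasure P ∧
      (∀ i : Fin (ℓ + 1), ENNReal.ofReal (1 - ((i : ℕ) : ℝ) / ℓ) ≤ P (S i)) → cvar P ε X ≤ b) ↔
    ∃ (w t : ℝ) (v : Fin (ℓ + 1) → ℝ), (∀ i, 0 ≤ v i) ∧
      w + ∑ i : Fin (ℓ + 1), (((i : ℕ) : ℝ) / ℓ - 1) * v i ≤ (b - t) * (1 - ε) ∧
      (∀ i : Fin (ℓ + 1), 0 ≤ w - ∑ j ∈ Finset.Iic i, v j) ∧
      ∀ i : Fin (ℓ + 1), ∀ y ∈ S i, X y ≤ w - ∑ j ∈ Finset.Iic i, v j + t :=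
  ⟨exists_certificate_of_forall_cvar_le hℓ hε hS hmeas hX hbdd hmax,
    fun ⟨_, _, _, hv, hobj, hpart, hbound⟩ _ ⟨_, hP⟩ =>
      cvar_le_of_certificate hε hS hmeas hX hbdd hP hv hobj hpart hbound⟩

end NestedLevels

theorem antitoneOn_of_cut {E : Type*} [TopologicalSpace E] {π : E → ℝ} {C : ℝ → Set E}
    (hcut : ∀ lam : ℝ, 0 < lam → C lam = {a | lam ≤ π a})
    (hsupp : C 0 = closure {a | 0 < π a}) : AntitoneOn C (Ici 0) := by
  intro l hl μ hμ hlμ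
  rcases (mem_Ici.1 hl).eq_or_lt with rfl | hl'
  · rcases (mem_Ici.1 hμ).eq_or_lt with rfl | hμ'
    · exact le_rfl
    · rw [hcut μ hμ', hsupp]
      exact fun a ha => subset_closure (hμ'.trans_le ha)
  · rw [hcut l hl', hcut μ (hl'.trans_le hlμ)]
    exact fun a ha => hlμ.trans ha

theorem cvar_constraint_iff_linfty_general (n ℓ : ℕ) (hℓ : 1 ≤ ℓ)
    (π : (Fin n → ℝ) → ℝ)
    (C : ℝ → Set (Fin n → ℝ))
    (hcut : ∀ lam : ℝ, 0 < lam → C lam = {a | lam ≤ π a})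
    (hsupp : C 0 = closure {a | 0 < π a})
    (ahat : Fin n → ℝ)
    (hcompact : IsCompact (C 0))
    (hclosed : ∀ lam ∈ Icc (0 : ℝ) 1, IsClosed (C lam))
    -- the cuts have the box-plus-`L_∞`-ball form
    (lo hi : Fin (ℓ + 1) → Fin n → ℝ) (d : Fin (ℓ + 1) → ℝ)
    (hlo : ∀ i j, lo i j ≤ ahat j) (hhi : ∀ i j, ahat j ≤ hi i j) (hd : ∀ i, 0 ≤ d i)
    (hform : ∀ i : Fin (ℓ + 1),
      C (((i : ℕ) : ℝ) / ℓ) =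
        {a | (∀ j, lo i j ≤ a j ∧ a j ≤ hi i j) ∧ (∀ j, |a j - ahat j| ≤ d i)})
    (ε : ℝ) (hε : ε ∈ Ico (0 : ℝ) 1) (b : ℝ) (x : Fin n → ℝ) :
    (∀ P ∈ ambiguitySet n ℓ C, cvar P ε (fun a => ∑ j, a j * x j) ≤ b)
    ↔ ∃ (w t : ℝ) (v : Fin (ℓ + 1) → ℝ)
        (α β φ ξ γ : Fin (ℓ + 1) → Fin n → ℝ),
        (∀ i, 0 ≤ v i) ∧
        (∀ i j, 0 ≤ α i j) ∧ (∀ i j, 0 ≤ β i j) ∧ (∀ i j, 0 ≤ φ i j) ∧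
        (∀ i j, 0 ≤ ξ i j) ∧ (∀ i j, 0 ≤ γ i j) ∧
        w + ∑ i : Fin (ℓ + 1), (((i : ℕ) : ℝ) / ℓ - 1) * v i ≤ (b - t) * (1 - ε) ∧
        (∀ i : Fin (ℓ + 1), 0 ≤ w - ∑ j ∈ Finset.Iic i, v j) ∧
        (∀ i : Fin (ℓ + 1),
          ∑ j, hi i j * α i j - ∑ j, lo i j * β i j + ∑ j, ahat j * (φ i j - ξ i j)
            + d i * ∑ j, γ i j ≤ w - ∑ j ∈ Finset.Iic i, v j + t) ∧
        (∀ i j, α i j - β i j + φ i j - ξ i j = x j) ∧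
        (∀ i j, 0 ≤ γ i j - φ i j - ξ i j) := by
  have hX : Continuous fun a : Fin n → ℝ => ∑ j, a j * x j := by fun_prop
  have hbox (i : Fin (ℓ + 1)) : C (((i : ℕ) : ℝ) / ℓ) = boxBall (lo i) (hi i) ahat (d i) := hform i
  have hS : Antitone fun k : ℕ => C (k / ℓ) := fun j k hjk =>
    antitoneOn_of_cut hcut hsupp (mem_Ici.2 (by positivity)) (mem_Ici.2 (by positivity))
      (by gcongr)
  have hmeas (k : ℕ) (hk : k ≤ ℓ) : MeasurableSet (C (k / ℓ)) :=
    (hclosed _ ⟨by positivity, div_le_one_of_le₀ (by exact_mod_cast hk) (by positivity)⟩)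
      |>.measurableSet
  have hmax (k : ℕ) (hk : k ≤ ℓ) :
      ∃ y ∈ C (k / ℓ), IsMaxOn (fun a => ∑ j, a j * x j) (C (k / ℓ)) y :=
    hbox ⟨k, Nat.lt_succ_of_le hk⟩ ▸ exists_isMaxOn_boxBall (hlo _) (hhi _) (hd _) x
  have hdual (i : Fin (ℓ + 1)) (c : ℝ) :=
    hbox i ▸ forall_mem_boxBall_le_iff (hlo i) (hhi i) (hd i) x c
  refine (forall_cvar_le_iff_exists_certificate (by omega) hε hS hmeas hX.measurable
    (by simpa using hcompact.bddBelow_image hX.continuousOn) hmax).trans ⟨?_, ?_⟩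
  · rintro ⟨w, t, v, hv, hobj, hpart, hbound⟩
    choose α β φ ξ γ hα hβ hφ hξ hγ hval hfeas hγφξ using fun i => (hdual i _).1 (hbound i)
    exact ⟨w, t, v, α, β, φ, ξ, γ, hv, hα, hβ, hφ, hξ, hγ, hobj, hpart, hval, hfeas, hγφξ⟩
  · rintro ⟨w, t, v, α, β, φ, ξ, γ, hv, hα, hβ, hφ, hξ, hγ, hobj, hpart, hval, hfeas, hγφξ⟩
    exact ⟨w, t, v, hv, hobj, hpart, fun i => (hdual i _).2
      ⟨α i, β i, φ i, ξ i, γ i, hα i, hβ i, hφ i, hξ i, hγ i, hval i, hfeas i, hγφξ i⟩⟩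

/-- Linear programming reformulation of the CVaR constraint for cuts given by a box
together with an `L_∞`-norm (maximum norm) budget constraint. -/
theorem cvar_constraint_iff_linfty (n ℓ : ℕ) (hn : 1 ≤ n) (hℓ : 1 ≤ ℓ)
    (π : (Fin n → ℝ) → ℝ) (hrange : ∀ a, π a ∈ Icc (0 : ℝ) 1)
    (C : ℝ → Set (Fin n → ℝ))
    (hcut : ∀ lam : ℝ, 0 < lam → C lam = {a | lam ≤ π a})
    (hsupp : C 0 = closure {a | 0 < π a})
    (ahat : Fin n → ℝ) (hnorm : π ahat = 1)
    (hcont : ContinuousOn π (C 0))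
    (hcompact : IsCompact (C 0))
    (hclosed : ∀ lam ∈ Icc (0 : ℝ) 1, IsClosed (C lam))
    (hconvex : ∀ lam ∈ Icc (0 : ℝ) 1, Convex ℝ (C lam))
    (hint : ∀ lam ∈ Ico (0 : ℝ) 1, (interior (C lam)).Nonempty)
    -- the cuts have the box-plus-`L_∞`-ball form
    (lo hi : Fin (ℓ + 1) → Fin n → ℝ) (d : Fin (ℓ + 1) → ℝ)
    (hlo : ∀ i j, lo i j ≤ ahat j) (hhi : ∀ i j, ahat j ≤ hi i j) (hd : ∀ i, 0 ≤ d i)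
    (hform : ∀ i : Fin (ℓ + 1),
      C (((i : ℕ) : ℝ) / ℓ) =
        {a | (∀ j, lo i j ≤ a j ∧ a j ≤ hi i j) ∧ (∀ j, |a j - ahat j| ≤ d i)})
    (ε : ℝ) (hε : ε ∈ Ico (0 : ℝ) 1) (b : ℝ) (x : Fin n → ℝ) :
    (∀ P ∈ ambiguitySet n ℓ C, cvar P ε (fun a => ∑ j, a j * x j) ≤ b)
    ↔ ∃ (w t : ℝ) (v : Fin (ℓ + 1) → ℝ)
        (α β φ ξ γ : Fin (ℓ + 1) → Fin n → ℝ),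
        (∀ i, 0 ≤ v i) ∧
        (∀ i j, 0 ≤ α i j) ∧ (∀ i j, 0 ≤ β i j) ∧ (∀ i j, 0 ≤ φ i j) ∧
        (∀ i j, 0 ≤ ξ i j) ∧ (∀ i j, 0 ≤ γ i j) ∧
        w + ∑ i : Fin (ℓ + 1), (((i : ℕ) : ℝ) / ℓ - 1) * v i ≤ (b - t) * (1 - ε) ∧
        (∀ i : Fin (ℓ + 1), 0 ≤ w - ∑ j ∈ Finset.Iic i, v j) ∧
        (∀ i : Fin (ℓ + 1),
          ∑ j, hi i j * α i j - ∑ j, lo i j * β i j + ∑ j, ahat j * (φ i j - ξ i j)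
            + d i * ∑ j, γ i j ≤ w - ∑ j ∈ Finset.Iic i, v j + t) ∧
        (∀ i j, α i j - β i j + φ i j - ξ i j = x j) ∧
        (∀ i j, 0 ≤ γ i j - φ i j - ξ i j) :=
  cvar_constraint_iff_linfty_general n ℓ hℓ π C hcut hsupp ahat hcompact hclosed lo hi d hlo hhi hd
    hform ε hε b x
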